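/- For $g \in \mathbb{C}$, $\lambda_1, \lambda_2 \in \mathbb{C}$, define $\mathcal{H}_1^{(g)} f(\lambda_1,\lambda_2) = -\frac{1}{\lambda_1 - \lambda_2}\big\{(\lambda_1 - \lambda_2 + 2 - 2g) f(\lambda_1 + 2, \lambda_2) + (\lambda_1 - \lambda_2 - 2 + 2g) f(\lambda_1, \lambda_2 + 2)\big\}$. Suppose $\psi: \mathbb{C} \to \mathbb{C}$ satisfies the three-term recurrence $\frac{1}{\lambda}\big\{(\lambda + 2g)\psi(\lambda + 2) + (\lambda - 2g)\psi(\lambda - 2)\big\} = (e^{x} + e^{-x})\psi(\lambda)$ for all $\lambda \neq 0$, where $x = x_1 - x_2$ is fixed. Then the function $\Phi(\lambda_1,\lambda_2) = \exp\big\{\tfrac{1}{2}(\lambda_1+\lambda_2)(x_1+x_2)\big\} \Gamma\big(g - \tfrac{\lambda_1-\lambda_2}{2}\big)\Gamma\big(g + \tfrac{\lambda_1-\lambda_2}{2}\big)\psi(\lambda_1 - \lambda_2)$ satisfies $\mathcal{H}_1^{(g)}\Phi(\lambda_1,\lambda_2) = (e^{2x_1} + e^{2x_2})\Phi(\lambda_1,\lambda_2)$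 at all points where $\lambda_1 \neq \lambda_2$ and all Gamma factors are defined and nonzero. -/
import Mathlib


noncomputable section

/-- The dual Hamiltonian `𝓗₁^{(g)}` for `n = 2`. -/
def H1op (g : ℂ) (f : ℂ → ℂ → ℂ) (l₁ l₂ : ℂ) : ℂ :=
  -(1 / (l₁ - l₂)) *
    ((l₁ - l₂ + 2 - 2 * g) * f (l₁ + 2) l₂ + (l₁ - l₂ - 2 + 2 * g) * f l₁ (l₂ + 2))

theorem statement18 (g x₁ x₂ : ℂ) (ψ : ℂ → ℂ)
    (hψ : ∀ l : ℂ, l ≠ 0 →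
      (1 / l) * ((l + 2 * g) * ψ (l + 2) + (l - 2 * g) * ψ (l - 2)) =
        (Complex.exp (x₁ - x₂) + Complex.exp (-(x₁ - x₂))) * ψ l)
    (lam₁ lam₂ : ℂ) (hne : lam₁ ≠ lam₂)
    (hG1 : Complex.Gamma (g - (lam₁ - lam₂) / 2) ≠ 0)
    (hG2 : Complex.Gamma (g + (lam₁ - lam₂) / 2) ≠ 0)
    (hG3 : Complex.Gamma (g - (lam₁ - lam₂) / 2 - 1) ≠ 0)
    (hG4 : Complex.Gamma (g + (lam₁ - lam₂) / 2 + 1) ≠ 0)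
    (hG5 : Complex.Gamma (g - (lam₁ - lam₂) / 2 + 1) ≠ 0)
    (hG6 : Complex.Gamma (g + (lam₁ - lam₂) / 2 - 1) ≠ 0) :
    H1op g
      (fun l₁ l₂ : ℂ =>
        Complex.exp ((1 / 2) * (l₁ + l₂) * (x₁ + x₂)) *
          Complex.Gamma (g - (l₁ - l₂) / 2) * Complex.Gamma (g + (l₁ - l₂) / 2) *
          ψ (l₁ - l₂)) lam₁ lam₂ =
      (Complex.exp (2 * x₁) + Complex.exp (2 * x₂)) *
        (Complex.exp ((1 / 2) * (lam₁ + lam₂) * (x₁ + x₂)) *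
          Complex.Gamma (g - (lam₁ - lam₂) / 2) *
          Complex.Gamma (g + (lam₁ - lam₂) / 2) * ψ (lam₁ - lam₂)) := by
  have hl : lam₁ - lam₂ ≠ 0 := sub_ne_zero.mpr hne
  set l : ℂ := lam₁ - lam₂ with hldef
  have h1 : g - l / 2 - 1 ≠ 0 := fun h => hG3 (by rw [h, Complex.Gamma_zero])
  have h2 : g + l / 2 ≠ 0 := fun h => hG2 (by rw [h, Complex.Gamma_zero])
  have h3 : g - l / 2 ≠ 0 := fun h => hG1 (by rw [h, Complex.Gamma_zero])
  have h4 : g + l / 2 - 1 ≠ 0 := fun h => hG6 (by rw [h, Complex.Gamma_zero])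
  have e1 : Complex.Gamma (g - l / 2) = (g - l / 2 - 1) * Complex.Gamma (g - l / 2 - 1) := by
    have h := Complex.Gamma_add_one _ h1
    rw [show g - l / 2 - 1 + 1 = g - l / 2 by ring] at h
    exact h
  have e2 : Complex.Gamma (g + l / 2 + 1) = (g + l / 2) * Complex.Gamma (g + l / 2) :=
    Complex.Gamma_add_one _ h2
  have e3 : Complex.Gamma (g - l / 2 + 1) = (g - l / 2) * Complex.Gamma (g - l / 2) :=
    Complex.Gamma_add_one _ h3
  have e4 : Complex.Gamma (g + l / 2) = (g + l / 2 - 1) * Complex.Gamma (g + l / 2 - 1) := by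
    have h := Complex.Gamma_add_one _ h4
    rw [show g + l / 2 - 1 + 1 = g + l / 2 by ring] at h
    exact h
  have hrec : (l + 2 * g) * ψ (l + 2) + (l - 2 * g) * ψ (l - 2) =
      l * ((Complex.exp (x₁ - x₂) + Complex.exp (-(x₁ - x₂))) * ψ l) := by
    have h := hψ l hl
    rw [one_div, inv_mul_eq_div, div_eq_iff hl] at h
    linear_combination h
  have a1 : g - (l + 2) / 2 = g - l / 2 - 1 := by ring
  have a2 : g + (l + 2) / 2 = g + l / 2 + 1 := by ring
  have a3 : g - (l - 2) / 2 = g - l / 2 + 1 := by ring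
  have a4 : g + (l - 2) / 2 = g + l / 2 - 1 := by ring
  have a5 : lam₁ + 2 - lam₂ = l + 2 := by rw [hldef]; ring
  have a6 : lam₁ - (lam₂ + 2) = l - 2 := by rw [hldef]; ring
  have b1 : Complex.exp ((1 / 2) * (lam₁ + 2 + lam₂) * (x₁ + x₂)) =
      Complex.exp ((1 / 2) * (lam₁ + lam₂) * (x₁ + x₂)) * Complex.exp (x₁ + x₂) := by
    rw [← Complex.exp_add]; ring_nf
  have b2 : Complex.exp ((1 / 2) * (lam₁ + (lam₂ + 2)) * (x₁ + x₂)) =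
      Complex.exp ((1 / 2) * (lam₁ + lam₂) * (x₁ + x₂)) * Complex.exp (x₁ + x₂) := by
    rw [← Complex.exp_add]; ring_nf
  have b3 : Complex.exp (2 * x₁) = Complex.exp (x₁ + x₂) * Complex.exp (x₁ - x₂) := by
    rw [← Complex.exp_add]; ring_nf
  have b4 : Complex.exp (2 * x₂) = Complex.exp (x₁ + x₂) * Complex.exp (-(x₁ - x₂)) := by
    rw [← Complex.exp_add]; ring_nf
  simp only [H1op, a1, a2, a3, a4, a5, a6, b1, b2, b3, b4, e2, e3, e1, e4]
  rw [neg_mul, neg_eq_iff_eq_neg, one_div, inv_mul_eq_div, div_eq_iff hl]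
  linear_combination (-(Complex.exp ((1 / 2) * (lam₁ + lam₂) * (x₁ + x₂)) *
    Complex.exp (x₁ + x₂) * (g - l / 2 - 1) * Complex.Gamma (g - l / 2 - 1) *
    (g + l / 2 - 1) * Complex.Gamma (g + l / 2 - 1))) * hrec
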